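/- Let d ≥ 1, let α > 0, β > 0, and let M : [0,∞) → ℝ^{d×d} be a continuously differentiable family of symmetric matrices with M(t) ⪰ α I for all t ≥ 0. Let f : ℝᵈ × ℝ → ℝᵈ be continuous and continuously differentiable in its first argument, with spatial Jacobian Df(x,t), and assume the time-varying-metric contraction condition: for all x ∈ ℝᵈ and t ≥ 0, Ṁ(t) + Df(x,t)ᵀ M(t) + M(t) Df(x,t) ⪯ −2β M(t). Then for any two solutions x, y : [0,∞) → ℝᵈ of ż(t) = f(z(t), t) and all t ≥ 0, ⟨x(t) − y(t), M(t)(x(t) − y(t))⟩ ≤ e^{−2βt} ⟨x(0) − y(0), M(0)(x(0) − y(0))⟩, and consequently ‖x(t) − y(t)‖² ≤ α^{−1} e^{−2βt} ⟨x(0) − y(0), M(0)(x(0) − y(0))⟩. -/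

import Mathlib

/-!
Along the segment from `y(t)` to `x(t)`, the mean value theorem turns the contraction condition
on the Jacobian `Df` into the same inequality with `Df(·,t) v` replaced by the finite difference
`f(x(t),t) - f(y(t),t)`. Hence `V(t) = ⟪x(t) - y(t), M(t)(x(t) - y(t))⟫` satisfies
`V' ≤ -2β V`, so `e^{2βt} V(t)` is antitone, and `M(t) ⪰ α I` converts the decay of `V` into the
Euclidean bound.
-/

open RealInnerProductSpace

section

variable {E : Type*} [NormedAddCommGroup E] [InnerProductSpace ℝ E]

theorem inner_map_sub_add_inner_le_of_hasFDerivAt {F : E → E} {DF : E → E →L[ℝ] E}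
    (hF : ∀ z, HasFDerivAt F (DF z) z) (B : E →L[ℝ] E) {K : ℝ} {a b : E}
    (hK : ∀ z, ⟪DF z (a - b), B (a - b)⟫ + ⟪a - b, B (DF z (a - b))⟫ ≤ K) :
    ⟪F a - F b, B (a - b)⟫ + ⟪a - b, B (F a - F b)⟫ ≤ K := by
  set v := a - b
  let L : StrongDual ℝ E := innerSL ℝ (B v) + (innerSL ℝ v).comp B
  have hL : ∀ w, L w = ⟪w, B v⟫ + ⟪v, B w⟫ := fun w => by simp [L, real_inner_comm]
  obtain ⟨z, -, hz⟩ := domain_mvt (f := L ∘ F) (f' := fun z => L.comp (DF z))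
    (fun z _ => (L.hasFDerivAt.comp z (hF z)).hasFDerivWithinAt) convex_univ
    (Set.mem_univ b) (Set.mem_univ a)
  have hmvt : L (F a - F b) = L (DF z v) := by rw [map_sub]; exact hz
  rw [hL, hL] at hmvt
  exact hmvt ▸ hK z

theorem HasDerivAt.inner_clm_apply_self {e : ℝ → E} {e' : E} {A : ℝ → E →L[ℝ] E}
    {A' : E →L[ℝ] E} {t : ℝ} (he : HasDerivAt e e' t) (hA : HasDerivAt A A' t) :
    HasDerivAt (fun s => ⟪e s, A s (e s)⟫)
      (⟪e t, A' (e t)⟫ + ⟪e', A t (e t)⟫ + ⟪e t, A t e'⟫) t :=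
  (he.inner ℝ (hA.clm_apply he)).congr_deriv (by rw [inner_add_right]; ring)

end

theorem le_exp_mul_of_hasDerivAt_le_mul {V V' : ℝ → ℝ} {c : ℝ}
    (hV : ∀ t, 0 ≤ t → HasDerivAt V (V' t) t) (hV' : ∀ t, 0 ≤ t → V' t ≤ c * V t)
    {t : ℝ} (ht : 0 ≤ t) : V t ≤ Real.exp (c * t) * V 0 := by
  set g : ℝ → ℝ := fun s => Real.exp (-c * s) * V s
  have hg : ∀ s, 0 ≤ s → HasDerivAt g (Real.exp (-c * s) * (V' s - c * V s)) s := fun s hs =>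
    (((hasDerivAt_id s).const_mul (-c)).exp.mul (hV s hs)).congr_deriv (by simp only [id]; ring)
  have hg_anti : AntitoneOn g (Set.Ici 0) := by
    refine antitoneOn_of_hasDerivWithinAt_nonpos (convex_Ici 0)
      (fun s hs => (hg s hs).continuousAt.continuousWithinAt)
      (fun s hs => (hg s (interior_subset hs)).hasDerivWithinAt) (fun s hs => ?_)
    have hs : 0 ≤ s := interior_subset hs
    exact mul_nonpos_of_nonneg_of_nonpos (Real.exp_pos _).le (by linarith [hV' s hs])
  have hgt : g t ≤ V 0 := by simpa [g] using hg_anti Set.self_mem_Ici ht ht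
  calc V t = Real.exp (c * t) * g t := by
        rw [← mul_assoc, ← Real.exp_add, show c * t + -c * t = 0 by ring, Real.exp_zero, one_mul]
    _ ≤ Real.exp (c * t) * V 0 := mul_le_mul_of_nonneg_left hgt (Real.exp_pos _).le

theorem deterministic_contraction_time_varying_metric_general
    {d : ℕ} (α β : ℝ) (hα : 0 < α)
    (M M' : ℝ → (EuclideanSpace ℝ (Fin d) →L[ℝ] EuclideanSpace ℝ (Fin d)))
    (hM_deriv : ∀ t : ℝ, 0 ≤ t → HasDerivAt M (M' t) t)
    (hM_lb : ∀ t : ℝ, 0 ≤ t → ∀ v : EuclideanSpace ℝ (Fin d), α * ‖v‖ ^ 2 ≤ ⟪v, M t v⟫)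
    (f : EuclideanSpace ℝ (Fin d) → ℝ → EuclideanSpace ℝ (Fin d))
    (Df : EuclideanSpace ℝ (Fin d) → ℝ →
      (EuclideanSpace ℝ (Fin d) →L[ℝ] EuclideanSpace ℝ (Fin d)))
    (hf_deriv : ∀ (t : ℝ) (x : EuclideanSpace ℝ (Fin d)),
      HasFDerivAt (fun z => f z t) (Df x t) x)
    (hcontr : ∀ (x : EuclideanSpace ℝ (Fin d)) (t : ℝ), 0 ≤ t →
      ∀ v : EuclideanSpace ℝ (Fin d),
        ⟪v, M' t v⟫ + ⟪Df x t v, M t v⟫ + ⟪v, M t (Df x t v)⟫ ≤ -2 * β * ⟪v, M t v⟫)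
    (x y : ℝ → EuclideanSpace ℝ (Fin d))
    (hx : ∀ t : ℝ, 0 ≤ t → HasDerivAt x (f (x t) t) t)
    (hy : ∀ t : ℝ, 0 ≤ t → HasDerivAt y (f (y t) t) t) :
    ∀ t : ℝ, 0 ≤ t →
      ⟪x t - y t, M t (x t - y t)⟫ ≤
          Real.exp (-2 * β * t) * ⟪x 0 - y 0, M 0 (x 0 - y 0)⟫ ∧
        ‖x t - y t‖ ^ 2 ≤
          α⁻¹ * (Real.exp (-2 * β * t) * ⟪x 0 - y 0, M 0 (x 0 - y 0)⟫) := by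
  intro t ht
  have hdecay : ⟪x t - y t, M t (x t - y t)⟫ ≤
      Real.exp (-2 * β * t) * ⟪x 0 - y 0, M 0 (x 0 - y 0)⟫ := by
    refine le_exp_mul_of_hasDerivAt_le_mul
      (fun s hs => HasDerivAt.inner_clm_apply_self (e := fun s => x s - y s)
        ((hx s hs).sub (hy s hs)) (hM_deriv s hs))
      (fun s hs => ?_) ht
    have hdiff := inner_map_sub_add_inner_le_of_hasFDerivAt (hf_deriv s) (M s)
      (K := -2 * β * ⟪x s - y s, M s (x s - y s)⟫ - ⟪x s - y s, M' s (x s - y s)⟫) (a := x s) (b := y s) (fun z => by linarith [hcontr z s hs (x s - y s)])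
    linarith
  refine ⟨hdecay, ?_⟩
  rw [le_inv_mul_iff₀ hα]
  exact (hM_lb t ht _).trans hdecay

/-- Deterministic contraction (Theorem 1 of the paper) in a time-varying, uniformly positive
definite metric `M(t) ⪰ α I`: if `Ṁ(t) + Df(x,t)ᵀ M(t) + M(t) Df(x,t) ⪯ -2β M(t)`, then for any
two solutions `x, y` of `ż = f(z,t)`, the squared `M(t)`-distance decays as `e^{-2βt}`, and hence
`‖x(t) - y(t)‖² ≤ α⁻¹ e^{-2βt} ⟨x(0)-y(0), M(0)(x(0)-y(0))⟩`. -/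
theorem deterministic_contraction_time_varying_metric
    {d : ℕ} (hd : 1 ≤ d) (α β : ℝ) (hα : 0 < α) (hβ : 0 < β)
    (M M' : ℝ → (EuclideanSpace ℝ (Fin d) →L[ℝ] EuclideanSpace ℝ (Fin d)))
    (hM_deriv : ∀ t : ℝ, 0 ≤ t → HasDerivAt M (M' t) t)
    (hM'_cont : Continuous M')
    (hM_symm : ∀ (t : ℝ) (v w : EuclideanSpace ℝ (Fin d)), ⟪M t v, w⟫ = ⟪v, M t w⟫)
    (hM_lb : ∀ t : ℝ, 0 ≤ t → ∀ v : EuclideanSpace ℝ (Fin d), α * ‖v‖ ^ 2 ≤ ⟪v, M t v⟫)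
    (f : EuclideanSpace ℝ (Fin d) → ℝ → EuclideanSpace ℝ (Fin d))
    (Df : EuclideanSpace ℝ (Fin d) → ℝ →
      (EuclideanSpace ℝ (Fin d) →L[ℝ] EuclideanSpace ℝ (Fin d)))
    (hf_cont : Continuous fun p : EuclideanSpace ℝ (Fin d) × ℝ => f p.1 p.2)
    (hf_deriv : ∀ (t : ℝ) (x : EuclideanSpace ℝ (Fin d)),
      HasFDerivAt (fun z => f z t) (Df x t) x)
    (hDf_cont : ∀ t : ℝ, Continuous fun x => Df x t)
    (hcontr : ∀ (x : EuclideanSpace ℝ (Fin d)) (t : ℝ), 0 ≤ t →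
      ∀ v : EuclideanSpace ℝ (Fin d),
        ⟪v, M' t v⟫ + ⟪Df x t v, M t v⟫ + ⟪v, M t (Df x t v)⟫ ≤ -2 * β * ⟪v, M t v⟫)
    (x y : ℝ → EuclideanSpace ℝ (Fin d))
    (hx : ∀ t : ℝ, 0 ≤ t → HasDerivAt x (f (x t) t) t)
    (hy : ∀ t : ℝ, 0 ≤ t → HasDerivAt y (f (y t) t) t) :
    ∀ t : ℝ, 0 ≤ t →
      ⟪x t - y t, M t (x t - y t)⟫ ≤
          Real.exp (-2 * β * t) * ⟪x 0 - y 0, M 0 (x 0 - y 0)⟫ ∧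
        ‖x t - y t‖ ^ 2 ≤
          α⁻¹ * (Real.exp (-2 * β * t) * ⟪x 0 - y 0, M 0 (x 0 - y 0)⟫) :=
  deterministic_contraction_time_varying_metric_general α β hα M M' hM_deriv hM_lb f Df hf_deriv
    hcontr x y hx hy
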